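/- arXiv:2512.22994 — 5 statements merged into one kernel-verified Lean document; each statement's English description precedes it below -/
import Mathlib

section
/- Bendixson's theorem (special case): Let X be a real symmetric n×n matrix and Y a real skew-symmetric n×n matrix. Then for every (complex) eigenvalue λ of X + Y, the real part of λ satisfies λ_min(X) ≤ Re(λ) ≤ λ_max(X), where λ_min(X) and λ_max(X) are the smallest and largest eigenvalues of X. -/
/-!
If `(A + B) v = μ v` with `A` Hermitian and `B` skew-Hermitian, pairing with `v` gives
`μ ‖v‖² = v*Av + v*Bv` with `v*Av` real and `v*Bv` purely imaginary, so `Re μ` is a Rayleigh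
quotient of `A` and lies in `[a, b]` whenever `a ≤ A ≤ b` in the Loewner order. For real
symmetric `X`, bounds on its eigenvalues are such Loewner inequalities, and they survive
complexification because a real positive semidefinite matrix is `SᵀS` with `S` real.
-/

open Matrix
open scoped MatrixOrder ComplexOrder

namespace Matrix

theorem conjTranspose_map_ofReal {m l : Type*} (M : Matrix m l ℝ) :
    (M.map Complex.ofReal)ᴴ = Mᵀ.map Complex.ofReal := by
  rw [← conjTranspose_eq_transpose_of_trivial,
    conjTranspose_map _ fun _ ↦ (Complex.conj_ofReal _).symm]

variable {n : Type*} [Fintype n] [DecidableEq n]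

theorem exists_mulVec_eq_smul_of_mem_spectrum {K : Type*} [Field K] {A : Matrix n n K} {r : K}
    (h : r ∈ spectrum K A) : ∃ v : n → K, v ≠ 0 ∧ A *ᵥ v = r • v := by
  rw [← spectrum_toLin', ← Module.End.hasEigenvalue_iff_mem_spectrum] at h
  obtain ⟨v, hv⟩ := h.exists_hasEigenvector
  exact ⟨v, hv.2, by simpa using Module.End.mem_eigenspace_iff.1 hv.1⟩

theorem IsSymm.algebraMap_le {X : Matrix n n ℝ} (hX : X.IsSymm) {a : ℝ}
    (h : ∀ t : ℝ, (∃ v : n → ℝ, v ≠ 0 ∧ X *ᵥ v = t • v) → a ≤ t) :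
    algebraMap ℝ _ a ≤ X := by
  rw [algebraMap_le_iff_le_spectrum (isHermitian_iff_isSymm.2 hX).isSelfAdjoint]
  exact fun t ht ↦ h t (exists_mulVec_eq_smul_of_mem_spectrum ht)

theorem IsSymm.le_algebraMap {X : Matrix n n ℝ} (hX : X.IsSymm) {b : ℝ}
    (h : ∀ t : ℝ, (∃ v : n → ℝ, v ≠ 0 ∧ X *ᵥ v = t • v) → t ≤ b) :
    X ≤ algebraMap ℝ _ b := by
  rw [le_algebraMap_iff_spectrum_le (isHermitian_iff_isSymm.2 hX).isSelfAdjoint]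
  exact fun t ht ↦ h t (exists_mulVec_eq_smul_of_mem_spectrum ht)

theorem PosSemidef.map_ofReal {M : Matrix n n ℝ} (hM : M.PosSemidef) :
    (M.map Complex.ofReal).PosSemidef := by
  obtain ⟨S, rfl⟩ : ∃ S : Matrix n n ℝ, M = Sᴴ * S := by
    refine ⟨CFC.sqrt M, ?_⟩
    rw [(CFC.sqrt_nonneg M).posSemidef.isHermitian.eq, CFC.sqrt_mul_sqrt_self M hM.nonneg]
  have hmul : (Sᴴ * S).map Complex.ofReal = (S.map Complex.ofReal)ᴴ * S.map Complex.ofReal := by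
    rw [conjTranspose_map_ofReal, conjTranspose_eq_transpose_of_trivial]
    exact Matrix.map_mul (f := Complex.ofRealHom)
  rw [hmul]
  exact posSemidef_conjTranspose_mul_self _

theorem map_ofReal_mono {M N : Matrix n n ℝ} (h : M ≤ N) :
    M.map Complex.ofReal ≤ N.map Complex.ofReal := by
  rw [le_iff, ← Matrix.map_sub _ Complex.ofReal_sub]
  exact (le_iff.1 h).map_ofReal

theorem re_dotProduct_algebraMap_mulVec (a : ℝ) (v : n → ℂ) :
    (star v ⬝ᵥ algebraMap ℝ (Matrix n n ℂ) a *ᵥ v).re = a * (star v ⬝ᵥ v).re := by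
  rw [Algebra.algebraMap_eq_smul_one, smul_mulVec, one_mulVec, dotProduct_smul, Complex.smul_re,
    smul_eq_mul]

theorem mul_re_le_re_dotProduct_mulVec {A : Matrix n n ℂ} {a : ℝ} (h : algebraMap ℝ _ a ≤ A)
    (v : n → ℂ) : a * (star v ⬝ᵥ v).re ≤ (star v ⬝ᵥ A *ᵥ v).re := by
  have := (Complex.nonneg_iff.1 ((le_iff.1 h).dotProduct_mulVec_nonneg v)).1
  rw [sub_mulVec, dotProduct_sub, Complex.sub_re, re_dotProduct_algebraMap_mulVec] at this
  linarith

theorem re_dotProduct_mulVec_le_mul_re {A : Matrix n n ℂ} {b : ℝ} (h : A ≤ algebraMap ℝ _ b)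
    (v : n → ℂ) : (star v ⬝ᵥ A *ᵥ v).re ≤ b * (star v ⬝ᵥ v).re := by
  have := (Complex.nonneg_iff.1 ((le_iff.1 h).dotProduct_mulVec_nonneg v)).1
  rw [sub_mulVec, dotProduct_sub, Complex.sub_re, re_dotProduct_algebraMap_mulVec] at this
  linarith

omit [DecidableEq n] in
theorem re_dotProduct_mulVec_eq_zero {B : Matrix n n ℂ} (hB : Bᴴ = -B) (v : n → ℂ) :
    (star v ⬝ᵥ B *ᵥ v).re = 0 := by
  have h : star (star v ⬝ᵥ B *ᵥ v) = -(star v ⬝ᵥ B *ᵥ v) := by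
    rw [← star_dotProduct_star, star_star, star_mulVec, ← dotProduct_mulVec, hB, neg_mulVec,
      dotProduct_neg]
  have := congrArg Complex.re h
  simp only [Complex.star_def, Complex.conj_re, Complex.neg_re] at this
  linarith

theorem re_mem_Icc_of_add_mulVec_eq_smul {A B : Matrix n n ℂ} {a b : ℝ}
    (ha : algebraMap ℝ _ a ≤ A) (hb : A ≤ algebraMap ℝ _ b) (hB : Bᴴ = -B)
    {μ : ℂ} {v : n → ℂ} (hv : v ≠ 0) (h : (A + B) *ᵥ v = μ • v) : μ.re ∈ Set.Icc a b := by
  obtain ⟨hpos, him⟩ := Complex.pos_iff.1 (dotProduct_star_self_pos_iff.2 hv)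
  have hμ : (star v ⬝ᵥ A *ᵥ v).re = μ.re * (star v ⬝ᵥ v).re := by
    simpa only [add_mulVec, dotProduct_add, Complex.add_re, re_dotProduct_mulVec_eq_zero hB,
      add_zero, dotProduct_smul, smul_eq_mul, Complex.mul_re, ← him, mul_zero, sub_zero]
      using congrArg (fun w ↦ (star v ⬝ᵥ w).re) h
  exact ⟨le_of_mul_le_mul_right (hμ ▸ mul_re_le_re_dotProduct_mulVec ha v) hpos,
    le_of_mul_le_mul_right (hμ ▸ re_dotProduct_mulVec_le_mul_re hb v) hpos⟩

end Matrix

/-- Bendixson (real part): for `X` symmetric and `Y` skew-symmetric real matrices, the real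
part of every complex eigenvalue of `X + Y` lies between the smallest and the largest
eigenvalue of `X`. -/
theorem stmt3 {n : ℕ} (X Y : Matrix (Fin n) (Fin n) ℝ)
    (hX : X.IsSymm) (hY : Yᵀ = -Y) (a b : ℝ)
    (ha : (∃ v : Fin n → ℝ, v ≠ 0 ∧ X.mulVec v = a • v) ∧
      ∀ t : ℝ, (∃ v : Fin n → ℝ, v ≠ 0 ∧ X.mulVec v = t • v) → a ≤ t)
    (hb : (∃ v : Fin n → ℝ, v ≠ 0 ∧ X.mulVec v = b • v) ∧
      ∀ t : ℝ, (∃ v : Fin n → ℝ, v ≠ 0 ∧ X.mulVec v = t • v) → t ≤ b)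
    (μ : ℂ) (v : Fin n → ℂ) (hv : v ≠ 0)
    (h : ((X + Y).map Complex.ofReal).mulVec v = μ • v) :
    a ≤ μ.re ∧ μ.re ≤ b := by
  have hXa := map_ofReal_mono (IsSymm.algebraMap_le hX ha.2)
  have hXb := map_ofReal_mono (IsSymm.le_algebraMap hX hb.2)
  rw [map_algebraMap _ _ Complex.ofReal_zero rfl] at hXa hXb
  have hYc : (Y.map Complex.ofReal)ᴴ = -Y.map Complex.ofReal := by
    rw [conjTranspose_map_ofReal, hY, Matrix.map_neg _ Complex.ofReal_neg]
  rw [Matrix.map_add _ Complex.ofReal_add] at h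
  exact re_mem_Icc_of_add_mulVec_eq_smul hXa hXb hYc hv h
end

section
/- Bendixson's theorem (imaginary part, special case): Let X be a real symmetric n×n matrix and Y a real skew-symmetric n×n matrix. Then for every complex eigenvalue λ of X + Y, |Im(λ)| ≤ ρ(Y), the spectral radius of Y. -/
/-!
Pairing the eigen-equation `(X + Y) v = μ v` with `v` gives `μ ‖v‖² = ⟪v, X v⟫ + ⟪v, Y v⟫`,
and `⟪v, X v⟫` is real since `X` is Hermitian. Hence `|Im μ| ‖v‖² ≤ |⟪v, Y v⟫| ≤ ‖Y‖ ‖v‖²`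
for the `L²` operator norm. A skew-Hermitian matrix is normal, and in the C⋆-algebra of
complex matrices the norm of a normal element equals its spectral radius.
-/

open Matrix

/-- The spectral radius of a complex square matrix: supremum of the norms of its
eigenvalues. -/
noncomputable def specRad {n : ℕ} (M : Matrix (Fin n) (Fin n) ℂ) : ℝ :=
  sSup {r : ℝ | ∃ μ : ℂ, r = ‖μ‖ ∧ ∃ v : Fin n → ℂ, v ≠ 0 ∧ M.mulVec v = μ • v}

open scoped Matrix.Norms.L2Operator InnerProductSpace

theorem abs_im_le_norm_of_apply_eq_smul {E : Type*} [NormedAddCommGroup E]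
    [InnerProductSpace ℂ E] [CompleteSpace E] {S : E →L[ℂ] E} (hS : IsSelfAdjoint S)
    (R : E →L[ℂ] E) {μ : ℂ} {x : E} (hx : x ≠ 0) (h : (S + R) x = μ • x) :
    |μ.im| ≤ ‖R‖ := by
  have hquad : μ.im * ‖x‖ ^ 2 = (⟪x, R x⟫_ℂ).im := by
    have hSx : (⟪x, S x⟫_ℂ).im = 0 := hS.isSymmetric.im_inner_self_apply x
    have := congrArg (fun y => (⟪x, y⟫_ℂ).im) h
    simp only [_root_.add_apply, inner_add_right, Complex.add_im, hSx, zero_add,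
      inner_smul_right, inner_self_eq_norm_sq_to_K] at this
    simpa [← Complex.ofReal_pow] using this.symm
  have hbound : |(⟪x, R x⟫_ℂ).im| ≤ ‖R‖ * ‖x‖ ^ 2 :=
    calc |(⟪x, R x⟫_ℂ).im| ≤ ‖⟪x, R x⟫_ℂ‖ := Complex.abs_im_le_norm _
      _ ≤ ‖x‖ * ‖R x‖ := norm_inner_le_norm _ _
      _ ≤ ‖x‖ * (‖R‖ * ‖x‖) := by gcongr; exact R.le_opNorm x
      _ = ‖R‖ * ‖x‖ ^ 2 := by ring
  have hx2 : 0 < ‖x‖ ^ 2 := by positivity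
  rw [← hquad, abs_mul, abs_of_pos hx2] at hbound
  exact le_of_mul_le_mul_right hbound hx2

theorem Matrix.mem_spectrum_iff_exists_mulVec_eq_smul {ι K : Type*} [Fintype ι]
    [DecidableEq ι] [Field K] (M : Matrix ι ι K) (μ : K) :
    μ ∈ spectrum K M ↔ ∃ v : ι → K, v ≠ 0 ∧ M *ᵥ v = μ • v := by
  rw [← spectrum_toLin', ← Module.End.hasEigenvalue_iff_mem_spectrum,
    Module.End.hasEigenvalue_iff]
  simp [Submodule.ne_bot_iff, and_comm]

theorem specRad_eq_sSup_norm_spectrum {n : ℕ} (M : Matrix (Fin n) (Fin n) ℂ) :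
    specRad M = sSup (norm '' spectrum ℂ M) := by
  rw [specRad]
  congr 1
  ext r
  simp only [Set.mem_ofPred_eq, Set.mem_image, M.mem_spectrum_iff_exists_mulVec_eq_smul]
  exact ⟨fun ⟨μ, hr, hv⟩ => ⟨μ, hv, hr.symm⟩, fun ⟨μ, hv, hr⟩ => ⟨μ, hr.symm, hv⟩⟩

theorem norm_le_specRad {n : ℕ} (M : Matrix (Fin n) (Fin n) ℂ) [IsStarNormal M] :
    ‖M‖ ≤ specRad M := by
  rcases isEmpty_or_nonempty (Fin n) with hn | hn
  · rw [Subsingleton.elim M 0, norm_zero]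
    exact Real.sSup_nonneg fun r ⟨μ, hr, _⟩ => hr ▸ norm_nonneg μ
  obtain ⟨k, hk, hkM⟩ := spectrum.exists_nnnorm_eq_spectralRadius M
  rw [IsStarNormal.spectralRadius_eq_nnnorm, ENNReal.coe_inj] at hkM
  rw [specRad_eq_sSup_norm_spectrum, ← coe_nnnorm, ← hkM, coe_nnnorm]
  exact le_csSup ((spectrum.isCompact M).image continuous_norm).bddAbove ⟨k, hk, rfl⟩

/-- Bendixson (imaginary part): for `X` symmetric and `Y` skew-symmetric real matrices,
the imaginary part of every complex eigenvalue of `X + Y` is bounded in absolute value by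
the spectral radius of `Y`. -/
theorem stmt4 {n : ℕ} (X Y : Matrix (Fin n) (Fin n) ℝ)
    (hX : X.IsSymm) (hY : Yᵀ = -Y)
    (μ : ℂ) (v : Fin n → ℂ) (hv : v ≠ 0)
    (h : ((X + Y).map Complex.ofReal).mulVec v = μ • v) :
    |μ.im| ≤ specRad (Y.map Complex.ofReal) := by
  have hofReal : Function.Semiconj Complex.ofReal star star :=
    fun x => (Complex.conj_ofReal x).symm
  have hXc : (X.map Complex.ofReal).IsHermitian :=
    (isHermitian_iff_isSymm.mpr hX).map _ hofReal
  have hYc : IsStarNormal (Y.map Complex.ofReal) := by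
    refine skewAdjoint.isStarNormal_of_mem (skewAdjoint.mem_iff.mpr ?_)
    rw [star_eq_conjTranspose, ← conjTranspose_map _ hofReal,
      conjTranspose_eq_transpose_of_trivial, hY, Matrix.map_neg _ Complex.ofReal_neg]
  have heig : toEuclideanCLM (𝕜 := ℂ) ((X + Y).map Complex.ofReal) (WithLp.toLp 2 v) =
      μ • WithLp.toLp 2 v := by
    rw [toEuclideanCLM_toLp, h, WithLp.toLp_smul]
  rw [Matrix.map_add _ Complex.ofReal_add, map_add] at heig
  calc |μ.im| ≤ ‖toEuclideanCLM (𝕜 := ℂ) (Y.map Complex.ofReal)‖ :=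
        abs_im_le_norm_of_apply_eq_smul (hXc.isSelfAdjoint.map _) _
          ((WithLp.toLp_eq_zero 2).not.mpr hv) heig
    _ ≤ specRad (Y.map Complex.ofReal) := norm_le_specRad _
end

section
/- Wielandt's theorem: Let A be an n×n real matrix with all entries strictly positive and let r be its Perron–Frobenius eigenvalue (the eigenvalue of maximal modulus, which is real and positive). If B is an n×n complex matrix with |B_{ij}| ≤ A_{ij} for all i, j, then every eigenvalue λ of B satisfies |λ| ≤ r. -/
/-!
Gelfand's formula `ρ(M) = lim ‖M ^ k‖ ^ (1 / k)` holds for any algebra norm; take the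
`ℓ∞` operator norm, the largest row sum of entry moduli, which is monotone in the entry moduli.
The entrywise bound `|B ^ k| ≤ A ^ k` then gives `‖B ^ k‖ ≤ ‖A ^ k‖`, so `ρ(B) ≤ ρ(A) ≤ r`.
-/

open Matrix
open scoped ENNReal

namespace Matrix

theorem mem_spectrum_iff_exists_mulVec_eq_smul_s5 {n K : Type*} [Fintype n] [DecidableEq n] [Field K]
    (M : Matrix n n K) (z : K) :
    z ∈ spectrum K M ↔ ∃ v : n → K, v ≠ 0 ∧ M *ᵥ v = z • v := by
  rw [← spectrum_toLin', ← Module.End.hasEigenvalue_iff_mem_spectrum]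
  constructor
  · intro hz
    obtain ⟨v, hv, hv0⟩ := hz.exists_hasEigenvector
    exact ⟨v, hv0, by simpa [Module.End.mem_eigenspace_iff] using hv⟩
  · rintro ⟨v, hv0, hv⟩
    exact Module.End.hasEigenvalue_of_hasEigenvector
      ⟨by simpa [Module.End.mem_eigenspace_iff] using hv, hv0⟩

section LinftyOp

attribute [local instance] Matrix.linftyOpSeminormedAddCommGroup

theorem linfty_opNNNorm_le_of_norm_apply_le {m n α β : Type*} [Fintype m] [Fintype n]
    [SeminormedAddCommGroup α] [SeminormedAddCommGroup β] {A : Matrix m n α} {B : Matrix m n β}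
    (h : ∀ i j, ‖A i j‖ ≤ ‖B i j‖) : ‖A‖₊ ≤ ‖B‖₊ := by
  simp only [linfty_opNNNorm_def]
  exact Finset.sup_mono_fun fun i _ => Finset.sum_le_sum fun j _ => h i j

end LinftyOp

theorem norm_pow_apply_le_of_norm_apply_le {n R : Type*} [Fintype n] [DecidableEq n]
    [NormedRing R] [NormOneClass R] {B : Matrix n n R} {A : Matrix n n ℝ}
    (h : ∀ i j, ‖B i j‖ ≤ A i j) (k : ℕ) (i j : n) : ‖(B ^ k) i j‖ ≤ (A ^ k) i j := by
  induction k generalizing j with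
  | zero => by_cases hij : i = j <;> simp [hij]
  | succ k ih =>
    rw [pow_succ, pow_succ, mul_apply, mul_apply]
    refine (norm_sum_le _ _).trans (Finset.sum_le_sum fun l _ => ?_)
    exact (norm_mul_le _ _).trans
      (mul_le_mul (ih l) (h l j) (norm_nonneg _) ((norm_nonneg _).trans (ih l)))

section Gelfand

attribute [local instance] Matrix.linftyOpNormedRing Matrix.linftyOpNormedAlgebra

theorem spectralRadius_le_of_norm_pow_apply_le {n : Type*} [Fintype n] [DecidableEq n]
    {B C : Matrix n n ℂ} (h : ∀ k i j, ‖(B ^ k) i j‖ ≤ ‖(C ^ k) i j‖) :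
    spectralRadius ℂ B ≤ spectralRadius ℂ C := by
  refine le_of_tendsto_of_tendsto'
    (spectrum.pow_nnnorm_pow_one_div_tendsto_nhds_spectralRadius B)
    (spectrum.pow_nnnorm_pow_one_div_tendsto_nhds_spectralRadius C) fun k => ?_
  gcongr
  exact_mod_cast linfty_opNNNorm_le_of_norm_apply_le (h k)

end Gelfand

theorem spectralRadius_le_of_norm_apply_le {n : Type*} [Fintype n] [DecidableEq n]
    {B : Matrix n n ℂ} {A : Matrix n n ℝ} (h : ∀ i j, ‖B i j‖ ≤ A i j) :
    spectralRadius ℂ B ≤ spectralRadius ℂ (A.map Complex.ofReal) := by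
  refine spectralRadius_le_of_norm_pow_apply_le fun k i j => ?_
  have hpow : (A.map Complex.ofReal) ^ k = (A ^ k).map Complex.ofReal :=
    (map_pow Complex.ofRealHom.mapMatrix A k).symm
  rw [hpow, map_apply, Complex.norm_real]
  exact (norm_pow_apply_le_of_norm_apply_le h k i j).trans (Real.le_norm_self _)

end Matrix

theorem stmt5_general {n : ℕ} (A : Matrix (Fin n) (Fin n) ℝ)
    (r : ℝ) (hr : 0 < r)
    (hrmax : ∀ μ : ℂ, (∃ v : Fin n → ℂ, v ≠ 0 ∧
        (A.map Complex.ofReal).mulVec v = μ • v) → ‖μ‖ ≤ r)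
    (B : Matrix (Fin n) (Fin n) ℂ) (hB : ∀ i j, ‖B i j‖ ≤ A i j)
    (μ : ℂ) (hμ : ∃ v : Fin n → ℂ, v ≠ 0 ∧ B.mulVec v = μ • v) :
    ‖μ‖ ≤ r := by
  have hμB : (‖μ‖₊ : ℝ≥0∞) ≤ spectralRadius ℂ B :=
    le_iSup₂ (f := fun z (_ : z ∈ spectrum ℂ B) => (‖z‖₊ : ℝ≥0∞)) μ
      ((mem_spectrum_iff_exists_mulVec_eq_smul_s5 B μ).2 hμ)
  have hAr : spectralRadius ℂ (A.map Complex.ofReal) ≤ ENNReal.ofReal r :=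
    iSup₂_le fun z hz => by
      rw [← enorm_eq_nnnorm, ← ofReal_norm]
      exact ENNReal.ofReal_le_ofReal
        (hrmax z ((mem_spectrum_iff_exists_mulVec_eq_smul_s5 _ z).1 hz))
  rw [← ENNReal.ofReal_le_ofReal_iff hr.le, ofReal_norm, enorm_eq_nnnorm]
  exact hμB.trans ((spectralRadius_le_of_norm_apply_le hB).trans hAr)

/-- Wielandt's theorem: if `A` is entrywise positive with Perron–Frobenius eigenvalue `r`
(a positive real eigenvalue dominating all eigenvalues in modulus), and `B` is a complex
matrix with `|B i j| ≤ A i j`, then every eigenvalue `μ` of `B` satisfies `‖μ‖ ≤ r`. -/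
theorem stmt5 {n : ℕ} (A : Matrix (Fin n) (Fin n) ℝ) (hA : ∀ i j, 0 < A i j)
    (r : ℝ) (hr : 0 < r)
    (hreig : ∃ v : Fin n → ℝ, v ≠ 0 ∧ A.mulVec v = r • v)
    (hrmax : ∀ μ : ℂ, (∃ v : Fin n → ℂ, v ≠ 0 ∧
        (A.map Complex.ofReal).mulVec v = μ • v) → ‖μ‖ ≤ r)
    (B : Matrix (Fin n) (Fin n) ℂ) (hB : ∀ i j, ‖B i j‖ ≤ A i j)
    (μ : ℂ) (hμ : ∃ v : Fin n → ℂ, v ≠ 0 ∧ B.mulVec v = μ • v) :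
    ‖μ‖ ≤ r :=
  stmt5_general A r hr hrmax B hB μ hμ
end

section
/- Four-times bound on convective spectral radius: under the setting where T is an m×n incidence matrix (each row exactly one +1 and one -1), F diagonal with Tᵀdiag(F) = 0, C := (1/2)Tᵀ F |T|, it holds that 4ρ(C) ≤ ρ(|T Tᵀ| |F|), i.e., the spectral radius of the skew-symmetric convective operator is bounded by one quarter of the spectral radius of the nonnegative matrix |T Tᵀ| |F|. -/
open Matrix

/-- `T` is a cell-to-face incidence matrix: every row has exactly one `+1` and one `-1`
(in distinct columns) and zeros elsewhere. -/
def IsIncidence {m n : ℕ} (T : Matrix (Fin m) (Fin n) ℝ) : Prop :=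
  ∀ j : Fin m, ∃ a b : Fin n, a ≠ b ∧ T j a = 1 ∧ T j b = -1 ∧
    ∀ c : Fin n, c ≠ a → c ≠ b → T j c = 0

/-!
Write `C = ½ Tᵀ F |T|` and `A = |T|ᵀ |F| |T|`, and let `C v = μ v` with `v ≠ 0`, `w = |v|`.
Because `Tᵀ f = 0` the diagonal of `C` vanishes, while off the diagonal `|C| ≤ ½ A`; hence
`|μ| ‖w‖² ≤ ½ wᵀ (A - diag A) w`. Each row of `|T|` has exactly two ones, so
`wᵀ A w = ∑ⱼ |fⱼ| (w_a + w_b)² ≤ 2 wᵀ (diag A) w`, and together `4 |μ| ‖w‖² ≤ wᵀ A w`.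
The top eigenvalue `λ` of the symmetric matrix `A` bounds `wᵀ A w / ‖w‖²`, and since
`A = (|T|ᵀ |F|) |T|` while `|T| (|T|ᵀ |F|) = |T Tᵀ| |F|`, a positive `λ` is also an eigenvalue
of `|T Tᵀ| |F|`.
-/

section SpecRad

variable {k : ℕ} (A : Matrix (Fin k) (Fin k) ℂ)

attribute [local instance] Matrix.linftyOpNormedAddCommGroup in
theorem bddAbove_norm_eigenvalues :
    BddAbove {r : ℝ | ∃ μ : ℂ, r = ‖μ‖ ∧ ∃ v : Fin k → ℂ, v ≠ 0 ∧ A.mulVec v = μ • v} := by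
  refine ⟨‖A‖, ?_⟩
  rintro _ ⟨μ, rfl, v, hv, h⟩
  refine le_of_mul_le_mul_right ?_ (norm_pos_iff.mpr hv)
  rw [← norm_smul, ← h]
  exact linfty_opNorm_mulVec A v

theorem specRad_nonneg : 0 ≤ specRad A :=
  Real.sSup_nonneg <| by
    rintro _ ⟨μ, rfl, -⟩
    exact norm_nonneg μ

theorem norm_le_specRad_s13 {μ : ℂ} {v : Fin k → ℂ} (hv : v ≠ 0) (h : A *ᵥ v = μ • v) :
    ‖μ‖ ≤ specRad A :=
  le_csSup (bddAbove_norm_eigenvalues A) ⟨μ, rfl, v, hv, h⟩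

theorem specRad_le {r : ℝ} (hr : 0 ≤ r)
    (h : ∀ (μ : ℂ) (v : Fin k → ℂ), v ≠ 0 → A *ᵥ v = μ • v → ‖μ‖ ≤ r) : specRad A ≤ r :=
  Real.sSup_le (by rintro _ ⟨μ, rfl, v, hv, hμ⟩; exact h μ v hv hμ) hr

theorem abs_le_specRad_map_ofReal {B : Matrix (Fin k) (Fin k) ℝ} {l : ℝ} {u : Fin k → ℝ}
    (hu : u ≠ 0) (h : B *ᵥ u = l • u) : |l| ≤ specRad (B.map Complex.ofReal) := by
  rw [← Real.norm_eq_abs, ← Complex.norm_real]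
  refine norm_le_specRad_s13 _ (v := Complex.ofReal ∘ u) ?_ ?_
  · simpa [funext_iff] using hu
  · ext i
    exact (RingHom.map_mulVec Complex.ofRealHom B u i).symm.trans (by simp [h])

end SpecRad

theorem Matrix.mul_mulVec_mulVec_eq_smul_of_mul_mulVec_eq_smul {m n R : Type*} [Fintype m]
    [Fintype n] [CommRing R] (A : Matrix m n R) (B : Matrix n m R) {l : R} {u : n → R}
    (h : (B * A) *ᵥ u = l • u) : (A * B) *ᵥ (A *ᵥ u) = l • (A *ᵥ u) := by
  rw [mulVec_mulVec, Matrix.mul_assoc, ← mulVec_mulVec, h, mulVec_smul]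

theorem Matrix.IsHermitian.exists_eigenvector_forall_dotProduct_mulVec_le
    {ι : Type*} [Fintype ι] [DecidableEq ι] [Nonempty ι]
    {M : Matrix ι ι ℝ} (hM : M.IsHermitian) :
    ∃ l : ℝ, (∃ u, u ≠ 0 ∧ M *ᵥ u = l • u) ∧ ∀ w, w ⬝ᵥ M *ᵥ w ≤ l * (w ⬝ᵥ w) := by
  let T := toEuclideanLin M
  have hT : T.IsSymmetric := isSymmetric_toEuclideanLin_iff.mpr hM
  obtain ⟨x, hx⟩ := hT.hasEigenvalue_iSup_of_finiteDimensional.exists_hasEigenvector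
  refine ⟨_, ⟨x.ofLp, by simpa using hx.2,
    by simpa [T] using congrArg WithLp.ofLp hx.apply_eq_smul⟩, fun w => ?_⟩
  rcases eq_or_ne w 0 with rfl | hw
  · simp
  have hbdd : BddAbove (Set.range fun x : {x : EuclideanSpace ℝ ι // x ≠ 0} =>
      RCLike.re (inner ℝ (T x) (x : EuclideanSpace ℝ ι)) / ‖(x : EuclideanSpace ℝ ι)‖ ^ 2) := by
    refine ⟨‖LinearMap.toContinuousLinearMap T‖, ?_⟩
    rintro _ ⟨y, rfl⟩
    exact (le_abs_self _).trans ((LinearMap.toContinuousLinearMap T).rayleighQuotient_le_norm y)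
  have hrayleigh : RCLike.re (inner ℝ (T (WithLp.toLp 2 w)) (WithLp.toLp 2 w)) /
      ‖WithLp.toLp 2 w‖ ^ 2 = w ⬝ᵥ M *ᵥ w / (w ⬝ᵥ w) := by
    rw [EuclideanSpace.norm_sq_eq]
    simp [T, EuclideanSpace.inner_eq_star_dotProduct, dotProduct, sq]
  have := le_ciSup hbdd ⟨WithLp.toLp 2 w, by simpa using hw⟩
  rwa [hrayleigh, div_le_iff₀ (by simpa using dotProduct_self_star_pos_iff.mpr hw)] at this

theorem dotProduct_mulVec_le_specRad_mul {m n : ℕ} (A : Matrix (Fin m) (Fin n) ℝ)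
    (B : Matrix (Fin n) (Fin m) ℝ) (hBA : (B * A).IsHermitian) (w : Fin n → ℝ) :
    w ⬝ᵥ (B * A) *ᵥ w ≤ specRad ((A * B).map Complex.ofReal) * (w ⬝ᵥ w) := by
  have hW : 0 ≤ w ⬝ᵥ w := by simpa using dotProduct_star_self_nonneg w
  have hρ := specRad_nonneg ((A * B).map Complex.ofReal)
  cases isEmpty_or_nonempty (Fin n)
  · simp [dotProduct]
  obtain ⟨l, ⟨u, hu, h⟩, hq⟩ := hBA.exists_eigenvector_forall_dotProduct_mulVec_le
  refine (hq w).trans ?_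
  rcases le_or_gt l 0 with hl | hl
  · nlinarith
  have hAu : A *ᵥ u ≠ 0 := by
    intro h0
    rw [← mulVec_mulVec, h0, mulVec_zero, eq_comm, smul_eq_zero] at h
    exact h.elim hl.ne' hu
  have := abs_le_specRad_map_ofReal hAu (mul_mulVec_mulVec_eq_smul_of_mul_mulVec_eq_smul A B h)
  exact mul_le_mul_of_nonneg_right ((le_abs_self l).trans this) hW

theorem norm_mul_dotProduct_le_of_abs_le {ι : Type*} [Fintype ι] {G N : Matrix ι ι ℝ}
    (hGN : ∀ a b, |G a b| ≤ N a b) {μ : ℂ} {v : ι → ℂ}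
    (h : G.map Complex.ofReal *ᵥ v = μ • v) :
    ‖μ‖ * ((‖v ·‖) ⬝ᵥ (‖v ·‖)) ≤ (‖v ·‖) ⬝ᵥ N *ᵥ (‖v ·‖) := by
  have hrow : ∀ a, ‖μ‖ * ‖v a‖ ≤ (N *ᵥ (‖v ·‖)) a := fun a =>
    calc ‖μ‖ * ‖v a‖ = ‖∑ b, (G a b : ℂ) * v b‖ := by
          rw [← norm_mul, ← smul_eq_mul, ← Pi.smul_apply, ← h]; rfl
      _ ≤ ∑ b, |G a b| * ‖v b‖ := by
          refine (norm_sum_le _ _).trans_eq (Finset.sum_congr rfl fun b _ => ?_)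
          rw [norm_mul, Complex.norm_real, Real.norm_eq_abs]
      _ ≤ (N *ᵥ (‖v ·‖)) a :=
          Finset.sum_le_sum fun b _ => mul_le_mul_of_nonneg_right (hGN a b) (norm_nonneg _)
  rw [dotProduct, Finset.mul_sum]
  exact Finset.sum_le_sum fun a _ => by
    rw [mul_left_comm]; exact mul_le_mul_of_nonneg_left (hrow a) (norm_nonneg _)

theorem Matrix.transpose_mul_diagonal_mul_apply {l m n : Type*} [Fintype l] [DecidableEq l]
    (A : Matrix l m ℝ) (f : l → ℝ) (B : Matrix l n ℝ) (a : m) (b : n) :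
    (Aᵀ * diagonal f * B) a b = ∑ j, A j a * f j * B j b := by
  rw [mul_apply]
  simp only [mul_diagonal, transpose_apply]

theorem Matrix.abs_transpose_mul_diagonal_mul_apply_le {l m n : Type*} [Fintype l]
    [DecidableEq l] (A : Matrix l m ℝ) (f : l → ℝ) (B : Matrix l n ℝ) (a : m) (b : n) :
    |(Aᵀ * diagonal f * B) a b| ≤ ((A.map abs)ᵀ * diagonal (|f ·|) * B.map abs) a b := by
  simp only [transpose_mul_diagonal_mul_apply, map_apply]
  refine (Finset.abs_sum_le_sum_abs _ _).trans_eq ?_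
  simp only [abs_mul]

theorem Matrix.dotProduct_transpose_mul_diagonal_mul_mulVec {m n : Type*} [Fintype m] [Fintype n]
    [DecidableEq m] (S : Matrix m n ℝ) (d : m → ℝ) (w : n → ℝ) :
    w ⬝ᵥ (Sᵀ * diagonal d * S) *ᵥ w = ∑ j, d j * (S *ᵥ w) j ^ 2 := by
  rw [← mulVec_mulVec, ← mulVec_mulVec, dotProduct_mulVec, vecMul_transpose, dotProduct]
  simp only [mulVec_diagonal]
  exact Finset.sum_congr rfl fun j _ => by ring

theorem Matrix.dotProduct_diagonal_diag_transpose_mul_diagonal_mul_mulVec {m n : Type*} [Fintype m]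
    [Fintype n] [DecidableEq m] [DecidableEq n] (S : Matrix m n ℝ) (d : m → ℝ) (w : n → ℝ) :
    w ⬝ᵥ diagonal (Sᵀ * diagonal d * S).diag *ᵥ w = ∑ j, d j * ∑ c, (S j c * w c) ^ 2 := by
  simp only [dotProduct, mulVec_diagonal, diag_apply, transpose_mul_diagonal_mul_apply,
    Finset.mul_sum, Finset.sum_mul]
  rw [Finset.sum_comm]
  exact Finset.sum_congr rfl fun j _ => Finset.sum_congr rfl fun c _ => by ring

namespace IsIncidence

variable {m n : ℕ} {T : Matrix (Fin m) (Fin n) ℝ}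

theorem apply_eq_one_or_eq_neg_one_or_eq_zero (hT : IsIncidence T) (j : Fin m) (c : Fin n) :
    T j c = 1 ∨ T j c = -1 ∨ T j c = 0 := by
  obtain ⟨a, b, -, ha, hb, h0⟩ := hT j
  by_cases hca : c = a
  · exact Or.inl (hca ▸ ha)
  by_cases hcb : c = b
  · exact Or.inr (Or.inl (hcb ▸ hb))
  exact Or.inr (Or.inr (h0 c hca hcb))

theorem mul_apply_nonpos (hT : IsIncidence T) (j : Fin m) {c c' : Fin n} (hc : c ≠ c') :
    T j c * T j c' ≤ 0 := by
  obtain ⟨a, b, -, ha, hb, h0⟩ := hT j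
  have hentry (x : Fin n) : x = a ∧ T j x = 1 ∨ x = b ∧ T j x = -1 ∨ T j x = 0 := by
    by_cases hxa : x = a
    · exact Or.inl ⟨hxa, hxa ▸ ha⟩
    by_cases hxb : x = b
    · exact Or.inr (Or.inl ⟨hxb, hxb ▸ hb⟩)
    exact Or.inr (Or.inr (h0 x hxa hxb))
  rcases hentry c with ⟨rfl, h⟩ | ⟨rfl, h⟩ | h <;>
    rcases hentry c' with ⟨rfl, h'⟩ | ⟨rfl, h'⟩ | h' <;>
    simp_all

theorem exists_row_sums (hT : IsIncidence T) (j : Fin m) :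
    ∃ a b, T j a = 1 ∧ T j b = -1 ∧ (∀ g : Fin n → ℝ, ∑ c, T j c * g c = g a - g b) ∧
      ∀ g : Fin n → ℝ, ∑ c, |T j c| * g c = g a + g b := by
  obtain ⟨a, b, hab, ha, hb, h0⟩ := hT j
  have hsum (φ : ℝ → ℝ) (hφ : φ 0 = 0) (g : Fin n → ℝ) :
      ∑ c, φ (T j c) * g c = φ 1 * g a + φ (-1) * g b := by
    rw [Fintype.sum_eq_add a b hab fun c hc => by rw [h0 c hc.1 hc.2, hφ, zero_mul], ha, hb]
  refine ⟨a, b, ha, hb, fun g => ?_, fun g => ?_⟩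
  · simpa [sub_eq_add_neg] using hsum id rfl g
  · simpa using hsum abs abs_zero g

theorem abs_mul_transpose (hT : IsIncidence T) :
    (T * Tᵀ).map abs = T.map abs * (T.map abs)ᵀ := by
  ext j k
  obtain ⟨a, b, ha, hb, hsum, habs⟩ := hT.exists_row_sums j
  have hab : a ≠ b := by rintro rfl; linarith
  simp only [map_apply, mul_apply, transpose_apply]
  rw [hsum (T k), habs fun c => |T k c|, sub_eq_add_neg, ← abs_neg (T k b)]
  refine (abs_add_eq_add_abs_iff _ _).mpr ?_
  have := mul_nonpos_iff.mp (hT.mul_apply_nonpos k hab)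
  rcases this with h | h
  · exact Or.inl ⟨h.1, neg_nonneg.mpr h.2⟩
  · exact Or.inr ⟨h.1, neg_nonpos.mpr h.2⟩

theorem transpose_mul_diagonal_mul_abs_apply_self (hT : IsIncidence T) (f : Fin m → ℝ)
    (a : Fin n) : (Tᵀ * diagonal f * T.map abs) a a = (Tᵀ *ᵥ f) a := by
  simp only [transpose_mul_diagonal_mul_apply, map_apply, mulVec, dotProduct]
  refine Finset.sum_congr rfl fun j _ => ?_
  rcases hT.apply_eq_one_or_eq_neg_one_or_eq_zero j a with h | h | h <;> simp [h]

theorem abs_transpose_mul_diagonal_mul_abs_apply_le (hT : IsIncidence T) {f : Fin m → ℝ}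
    (hf : Tᵀ *ᵥ f = 0) (a b : Fin n) :
    |(Tᵀ * diagonal f * T.map abs) a b| ≤
      ((T.map abs)ᵀ * diagonal (|f ·|) * T.map abs -
        diagonal ((T.map abs)ᵀ * diagonal (|f ·|) * T.map abs).diag) a b := by
  rcases eq_or_ne a b with rfl | hab
  · simp [hT.transpose_mul_diagonal_mul_abs_apply_self, hf]
  · rw [Matrix.sub_apply, diagonal_apply_ne _ hab, sub_zero]
    simpa [Function.comp_def] using abs_transpose_mul_diagonal_mul_apply_le T f (T.map abs) a b

theorem dotProduct_mulVec_le_two_mul (hT : IsIncidence T) {d : Fin m → ℝ} (hd : 0 ≤ d)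
    (w : Fin n → ℝ) :
    w ⬝ᵥ ((T.map abs)ᵀ * diagonal d * T.map abs) *ᵥ w ≤
      2 * (w ⬝ᵥ diagonal ((T.map abs)ᵀ * diagonal d * T.map abs).diag *ᵥ w) := by
  rw [dotProduct_transpose_mul_diagonal_mul_mulVec,
    dotProduct_diagonal_diag_transpose_mul_diagonal_mul_mulVec, Finset.mul_sum]
  refine Finset.sum_le_sum fun j _ => ?_
  obtain ⟨a, b, ha, hb, -, habs⟩ := hT.exists_row_sums j
  have hlin : (T.map abs *ᵥ w) j = w a + w b := habs w
  have hsq : ∑ c, (T.map abs j c * w c) ^ 2 = w a ^ 2 + w b ^ 2 :=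
    calc ∑ c, (T.map abs j c * w c) ^ 2 = ∑ c, |T j c| * (|T j c| * w c ^ 2) :=
          Finset.sum_congr rfl fun c _ => by rw [map_apply]; ring
      _ = w a ^ 2 + w b ^ 2 := by rw [habs]; simp [ha, hb]
  rw [hlin, hsq]
  nlinarith [hd j, mul_nonneg (hd j) (sq_nonneg (w a - w b))]

end IsIncidence

/-- Four-times bound: for the skew-symmetric convective operator
`C = (1/2) Tᵀ F |T|` (with `Tᵀ diag F = 0`), `4 ρ(C) ≤ ρ(|T Tᵀ| |F|)`. -/
theorem stmt13 {m n : ℕ} (T : Matrix (Fin m) (Fin n) ℝ) (hT : IsIncidence T)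
    (f : Fin m → ℝ) (hf : Tᵀ.mulVec f = 0) :
    4 * specRad (((1 / 2 : ℝ) • (Tᵀ * Matrix.diagonal f * T.map (fun x => |x|))).map
        Complex.ofReal) ≤
      specRad (((T * Tᵀ).map (fun x => |x|) * Matrix.diagonal (fun j => |f j|)).map
        Complex.ofReal) := by
  set S := T.map abs
  set D := diagonal fun j => |f j|
  set M := Sᵀ * D * S
  have hM : M.IsHermitian := by
    simp [M, D, IsHermitian, conjTranspose_eq_transpose_of_trivial, Matrix.mul_assoc]
  rw [hT.abs_mul_transpose, show S * Sᵀ * D = S * (Sᵀ * D) from Matrix.mul_assoc ..,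
    ← le_div_iff₀' four_pos]
  refine specRad_le _ (div_nonneg (specRad_nonneg _) zero_le_four) fun μ v hv hμ => ?_
  have hC (a b : Fin n) :
      |((1 / 2 : ℝ) • (Tᵀ * diagonal f * S)) a b| ≤
        ((1 / 2 : ℝ) • (M - diagonal M.diag)) a b := by
    rw [Matrix.smul_apply, Matrix.smul_apply, smul_eq_mul, smul_eq_mul, abs_mul, abs_of_pos one_half_pos]
    exact mul_le_mul_of_nonneg_left (hT.abs_transpose_mul_diagonal_mul_abs_apply_le hf a b)
      one_half_pos.le
  have hdom := norm_mul_dotProduct_le_of_abs_le hC hμ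
  have hdiag := hT.dotProduct_mulVec_le_two_mul (d := fun j => |f j|) (fun j => abs_nonneg _)
    (‖v ·‖)
  have hρ := dotProduct_mulVec_le_specRad_mul S (Sᵀ * D) hM (‖v ·‖)
  have hW : 0 < (‖v ·‖) ⬝ᵥ (‖v ·‖) := by
    have hw : (‖v ·‖) ≠ 0 := fun h => hv (funext fun i => norm_eq_zero.mp (congrFun h i))
    simpa using dotProduct_self_star_pos_iff.mpr hw
  rw [smul_mulVec, dotProduct_smul, sub_mulVec, dotProduct_sub, smul_eq_mul] at hdom
  refine le_of_mul_le_mul_right ?_ hW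
  linarith
end

section
/- Decomposition of the first-order upwind convective operator: let T be an m×n incidence matrix, U an m×m diagonal matrix of face velocities, A an m×m positive diagonal matrix of face areas, and F := A U the diagonal mass-flux matrix. Define the upwind interpolation S^{UP} := (1/2)|T| + (1/2)·sign(U)·T, where sign(U) is the diagonal matrix of signs of the diagonal of U (with sign(0) = 0). Then the upwind convective operator C^{UP} := Tᵀ F S^{UP} satisfies C^{UP} = (1/2) Tᵀ F |T| + (1/2) Tᵀ |F| T, i.e., it splits into the skew-symmetric symmetry-preserving part (when Tᵀdiag(F)=0) plus a symmetric positive semi-definite diffusive-like part. -/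
open Matrix

/-- Decomposition of the first-order upwind convective operator: with face velocities `u`,
positive face areas `a`, mass fluxes `F = diagonal (a*u)`, and upwind interpolation
`S^UP = (1/2)|T| + (1/2) sign(U) T`, one has
`Tᵀ F S^UP = (1/2) Tᵀ F |T| + (1/2) Tᵀ |F| T`. -/
theorem stmt18 {m n : ℕ} (T : Matrix (Fin m) (Fin n) ℝ) (hT : IsIncidence T)
    (u a : Fin m → ℝ) (ha : ∀ j, 0 < a j) :
    Tᵀ * Matrix.diagonal (fun j => a j * u j) *
        ((1 / 2 : ℝ) • T.map (fun x => |x|) +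
          (1 / 2 : ℝ) • (Matrix.diagonal (fun j => Real.sign (u j)) * T)) =
      (1 / 2 : ℝ) • (Tᵀ * Matrix.diagonal (fun j => a j * u j) * T.map (fun x => |x|)) +
        (1 / 2 : ℝ) • (Tᵀ * Matrix.diagonal (fun j => |a j * u j|) * T) := by
  have key : Matrix.diagonal (fun j => a j * u j) *
      Matrix.diagonal (fun j => Real.sign (u j)) =
      Matrix.diagonal (fun j => |a j * u j|) := by
    rw [Matrix.diagonal_mul_diagonal]
    have hfun : (fun j => a j * u j * Real.sign (u j)) = fun j => |a j * u j| := by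
      funext j
      have hs : u j * Real.sign (u j) = |u j| := by
        rcases lt_trichotomy (u j) 0 with h | h | h
        · rw [Real.sign_of_neg h, abs_of_neg h]; ring
        · simp [h]
        · rw [Real.sign_of_pos h, abs_of_pos h]; ring
      rw [mul_assoc, hs, abs_mul, abs_of_pos (ha j)]
    rw [hfun]
  rw [Matrix.mul_add, Matrix.mul_smul, Matrix.mul_smul]
  congr 1
  congr 1
  calc (Tᵀ * Matrix.diagonal (fun j => a j * u j)) *
        ((Matrix.diagonal fun j => Real.sign (u j)) * T)
      = Tᵀ * ((Matrix.diagonal (fun j => a j * u j)) *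
          (Matrix.diagonal fun j => Real.sign (u j))) * T := by
        simp only [Matrix.mul_assoc]
    _ = _ := by rw [key]
end
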